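/- arXiv:2011.05564 — 2 statements merged into one kernel-verified Lean document; each statement's English description precedes it below -/
import Mathlib

section
/- Let n, p ≥ 1, ρ = (n, n−1, …, 1), and let λ = [λ¹, λ²] ∈ ℤ^n be the weight associated to a pair of p-core partitions (λ¹, λ²) with ℓ(λ¹)+ℓ(λ²) ≤ n. Suppose 1 ≤ i < j ≤ n and a, l ≥ 1 are integers with (λ+ρ)_i − (λ+ρ)_j = a + l·p, and suppose the tuple obtained from λ+ρ by replacing the i-th entry by (λ+ρ)_i − a and the j-th entry by (λ+ρ)_j + a has pairwise distinct entries. Then i ≤ ℓ(λ¹) and j > n − ℓ(λ²), and moreover (λ+ρ)_i − a > n − ℓ(λ¹) and (λ+ρ)_j + a ≤ ℓ(λ²). -/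
/-- The hook length of the box `(i, j)` (0-indexed) of a Young diagram `μ`. -/
def YoungDiagram.hookLength (μ : YoungDiagram) (i j : ℕ) : ℕ :=
  μ.rowLen i + μ.colLen j - i - j - 1

/-- A partition is a `p`-core if none of its hook lengths is divisible by `p`. -/
def YoungDiagram.IsCore (μ : YoungDiagram) (p : ℕ) : Prop :=
  ∀ c ∈ μ.cells, ¬ p ∣ μ.hookLength c.1 c.2

/-- The weight `[λ¹, λ²] = λ¹ − reverse(λ²) ∈ ℤ^n` (0-indexed). -/
def pairWeight (n : ℕ) (l1 l2 : YoungDiagram) : Fin n → ℤ :=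
  fun i => (l1.rowLen i : ℤ) - (l2.rowLen (n - 1 - (i : ℕ)) : ℤ)

/-- `ρ = (n, n−1, …, 1)` (0-indexed). -/
def rhoGL (n : ℕ) : Fin n → ℤ := fun i => (n : ℤ) - (i : ℕ)

/-- first-column beta numbers, as integers -/
def betaZ (μ : YoungDiagram) (m : ℕ) : ℤ :=
  (μ.rowLen m : ℤ) + μ.colLen 0 - m - 1

lemma rowLen_pos_of_lt (μ : YoungDiagram) {m : ℕ} (hm : m < μ.colLen 0) :
    0 < μ.rowLen m := by
  have : (m, 0) ∈ μ := YoungDiagram.mem_iff_lt_colLen.mpr hm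
  exact YoungDiagram.mem_iff_lt_rowLen.mp this

lemma rowLen_zero_of_ge (μ : YoungDiagram) {m : ℕ} (hm : μ.colLen 0 ≤ m) :
    μ.rowLen m = 0 := by
  by_contra h
  have : (m, 0) ∈ μ := YoungDiagram.mem_iff_lt_rowLen.mpr (Nat.pos_of_ne_zero h)
  exact absurd (YoungDiagram.mem_iff_lt_colLen.mp this) (not_lt.mpr hm)

lemma betaZ_anti (μ : YoungDiagram) {a b : ℕ} (h : a ≤ b) :
    betaZ μ b + (b : ℤ) - a ≤ betaZ μ a := by
  have := μ.rowLen_anti a b h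
  unfold betaZ
  push_cast
  omega

lemma betaZ_pos (μ : YoungDiagram) {m : ℕ} (hm : m < μ.colLen 0) :
    (μ.colLen 0 : ℤ) - m ≤ betaZ μ m := by
  have := rowLen_pos_of_lt μ hm
  unfold betaZ
  omega

lemma core_beta_step (μ : YoungDiagram) {p : ℕ} (hp : 1 ≤ p)
    (hcore : μ.IsCore p) {m : ℕ} (hm : m < μ.colLen 0)
    (hβ : (p : ℤ) ≤ betaZ μ m) :
    ∃ m' < μ.colLen 0, betaZ μ m' = betaZ μ m - p := by
  classical
  set L := μ.colLen 0 with hL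
  set t : ℤ := betaZ μ m - p with ht
  by_contra hcon
  push_neg at hcon
  -- choose k : threshold
  obtain ⟨k, hkL, hk1, hk2⟩ :
      ∃ k, k ≤ L ∧ (∀ m' < k, t < betaZ μ m') ∧
        (∀ m', k ≤ m' → m' < L → betaZ μ m' < t) := by
    by_cases hex : ∃ m', m' < L ∧ betaZ μ m' ≤ t
    · have hspec := Nat.find_spec hex
      refine ⟨Nat.find hex, le_of_lt hspec.1, ?_, ?_⟩
      · intro m' hm'
        have h := Nat.find_min hex hm'
        push_neg at h
        exact h (lt_trans hm' hspec.1)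
      · intro m' hm' hm'L
        have h1 : betaZ μ (Nat.find hex) ≤ t := hspec.2
        have h2 : betaZ μ (Nat.find hex) ≠ t := hcon _ hspec.1
        have h3 := betaZ_anti μ hm'
        omega
    · push_neg at hex
      exact ⟨L, le_rfl, fun m' hm' => hex m' hm', fun m' h1 h2 => absurd h2 (not_lt.mpr h1)⟩
  have ht0 : 0 ≤ t := by omega
  have hmk : m < k := by
    by_contra h
    have := hk2 m (not_lt.mp h) hm
    omega
  have hk1L : (L : ℤ) - t ≤ k := by
    by_contra h
    push_neg at h
    have hkLlt : k < L := by omega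
    have h1 := hk2 k le_rfl hkLlt
    have h2 := betaZ_pos μ hkLlt
    omega
  have hkmp : k ≤ m + p := by
    by_contra h
    push_neg at h
    have h1 := hk1 (m + p) h
    have h2 := betaZ_anti μ (Nat.le_add_right m p)
    push_cast at h2
    omega
  set jZ : ℤ := t + k - L with hjZ
  have hjZ0 : 0 ≤ jZ := by omega
  set jN : ℕ := jZ.toNat with hjN
  have hjNZ : (jN : ℤ) = jZ := Int.toNat_of_nonneg hjZ0
  -- rows above threshold are long
  have hrow_lt : ∀ m' < k, jN < μ.rowLen m' := by
    intro m' hm'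
    have h1 : t + 1 ≤ betaZ μ (k - 1) := hk1 (k - 1) (by omega)
    have h2 := betaZ_anti μ (show m' ≤ k - 1 by omega)
    have h3 : t + k - m' ≤ betaZ μ m' := by push_cast at h2 ⊢; omega
    have : (jN : ℤ) + 1 ≤ μ.rowLen m' := by
      unfold betaZ at h3; omega
    exact_mod_cast by omega
  have hrow_ge : ∀ m', k ≤ m' → μ.rowLen m' ≤ jN := by
    intro m' hm'
    by_cases hkLlt : k < L
    · have h1 := hk2 k le_rfl hkLlt
      have h2 := μ.rowLen_anti k m' hm'
      have h3 : (μ.rowLen k : ℤ) ≤ jZ := by unfold betaZ at h1; omega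
      omega
    · have : L ≤ m' := by omega
      have := rowLen_zero_of_ge μ this
      omega
  have hcol : μ.colLen jN = k := by
    have hle : μ.colLen jN ≤ k := by
      by_contra h
      push_neg at h
      have : (k, jN) ∈ μ := YoungDiagram.mem_iff_lt_colLen.mpr h
      have := YoungDiagram.mem_iff_lt_rowLen.mp this
      have := hrow_ge k le_rfl
      omega
    have hge : k ≤ μ.colLen jN := by
      rcases Nat.eq_zero_or_pos k with hk0 | hk0
      · omega
      · have : (k - 1, jN) ∈ μ :=
          YoungDiagram.mem_iff_lt_rowLen.mpr (hrow_lt (k - 1) (by omega))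
        have := YoungDiagram.mem_iff_lt_colLen.mp this
        omega
    omega
  have hmem : (m, jN) ∈ μ := YoungDiagram.mem_iff_lt_rowLen.mpr (hrow_lt m hmk)
  have hhook : μ.hookLength m jN = p := by
    have h1 : (μ.rowLen m : ℤ) = betaZ μ m + 1 + m - L := by unfold betaZ; omega
    have h2 : betaZ μ m = t + p := by omega
    unfold YoungDiagram.hookLength
    rw [hcol]
    omega
  exact hcore (m, jN) ((YoungDiagram.mem_cells _).mpr hmem) (by rw [hhook])

section Zones

variable {n : ℕ} (l1 l2 : YoungDiagram)

lemma fval (m : Fin n) : pairWeight n l1 l2 m + rhoGL n m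
    = (l1.rowLen m : ℤ) - (l2.rowLen (n - 1 - (m : ℕ)) : ℤ) + n - m := by
  unfold pairWeight rhoGL; ring

lemma Zmid (m : Fin n) (h1 : l1.colLen 0 ≤ (m : ℕ)) (h2 : (m : ℕ) + l2.colLen 0 < n) :
    pairWeight n l1 l2 m + rhoGL n m = (n : ℤ) - (m : ℕ) := by
  rw [fval]
  rw [rowLen_zero_of_ge l1 h1, rowLen_zero_of_ge l2 (show l2.colLen 0 ≤ n - 1 - (m:ℕ) by omega)]
  push_cast; ring

lemma Zhead (hlen : l1.colLen 0 + l2.colLen 0 ≤ n) (m : Fin n) (h1 : (m : ℕ) < l1.colLen 0) :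
    pairWeight n l1 l2 m + rhoGL n m = (n : ℤ) - l1.colLen 0 + 1 + betaZ l1 m := by
  rw [fval]
  rw [rowLen_zero_of_ge l2 (show l2.colLen 0 ≤ n - 1 - (m:ℕ) by omega)]
  unfold betaZ
  push_cast
  ring

lemma Ztail (hlen : l1.colLen 0 + l2.colLen 0 ≤ n) (m : Fin n) (h2 : n ≤ (m : ℕ) + l2.colLen 0) :
    pairWeight n l1 l2 m + rhoGL n m = (l2.colLen 0 : ℤ) - betaZ l2 (n - 1 - (m : ℕ)) := by
  have hm := m.isLt
  rw [fval]
  rw [rowLen_zero_of_ge l1 (show l1.colLen 0 ≤ (m:ℕ) by omega)]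
  unfold betaZ
  have hr : ((n - 1 - (m : ℕ) : ℕ) : ℤ) = (n : ℤ) - 1 - (m : ℕ) := by
    push_cast; omega
  rw [hr]
  push_cast
  ring

lemma Zupper (hlen : l1.colLen 0 + l2.colLen 0 ≤ n) (m : Fin n)
    (h1 : l1.colLen 0 ≤ (m : ℕ)) :
    pairWeight n l1 l2 m + rhoGL n m ≤ (n : ℤ) - l1.colLen 0 := by
  have hm := m.isLt
  by_cases h2 : (m : ℕ) + l2.colLen 0 < n
  · rw [Zmid l1 l2 m h1 h2]; omega
  · push_neg at h2
    rw [Ztail l1 l2 hlen m h2]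
    have hr : n - 1 - (m : ℕ) < l2.colLen 0 := by omega
    have := betaZ_pos l2 hr
    have hrZ : ((n - 1 - (m : ℕ) : ℕ) : ℤ) = (n : ℤ) - 1 - (m : ℕ) := by push_cast; omega
    omega

lemma Zlower (m : Fin n) (h2 : (m : ℕ) + l2.colLen 0 < n) :
    (l2.colLen 0 : ℤ) + 1 ≤ pairWeight n l1 l2 m + rhoGL n m := by
  rw [fval]
  rw [rowLen_zero_of_ge l2 (show l2.colLen 0 ≤ n - 1 - (m:ℕ) by omega)]
  have : (0 : ℤ) ≤ l1.rowLen m := Int.natCast_nonneg _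
  omega

lemma stepUp (hn : 1 ≤ n) {p : ℕ} (hp : 1 ≤ p)
    (hlen : l1.colLen 0 + l2.colLen 0 ≤ n) (hcore2 : l2.IsCore p)
    (m : Fin n) (w : ℤ) (hw : pairWeight n l1 l2 m + rhoGL n m = w)
    (hb : w + p ≤ (n : ℤ) - l1.colLen 0) :
    ∃ m' : Fin n, pairWeight n l1 l2 m' + rhoGL n m' = w + p := by
  by_cases hmid : (l2.colLen 0 : ℤ) + 1 ≤ w + p
  · set v : ℕ := (w + p).toNat with hv
    have hvZ : (v : ℤ) = w + p := Int.toNat_of_nonneg (by have := Int.natCast_nonneg (l2.colLen 0); omega)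
    have hv1 : l2.colLen 0 + 1 ≤ v := by omega
    have hv2 : (v : ℤ) ≤ (n : ℤ) - l1.colLen 0 := by omega
    have hv2' : v + l1.colLen 0 ≤ n := by omega
    refine ⟨⟨n - v, by omega⟩, ?_⟩
    rw [Zmid l1 l2 _ (by simp; omega) (by simp; omega)]
    simp only []
    push_cast
    omega
  · push_neg at hmid
    have hm := m.isLt
    have htail : n ≤ (m : ℕ) + l2.colLen 0 := by
      by_contra h
      push_neg at h
      have := Zlower l1 l2 m h
      omega
    have hr : n - 1 - (m : ℕ) < l2.colLen 0 := by omega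
    have hwt := Ztail l1 l2 hlen m htail
    have hβ : (p : ℤ) ≤ betaZ l2 (n - 1 - (m : ℕ)) := by omega
    obtain ⟨r', hr', hβ'⟩ := core_beta_step l2 hp hcore2 hr hβ
    refine ⟨⟨n - 1 - r', by omega⟩, ?_⟩
    have h2' : n ≤ (n - 1 - r') + l2.colLen 0 := by omega
    rw [Ztail l1 l2 hlen _ (by simpa using h2')]
    have : n - 1 - (n - 1 - r') = r' := by omega
    simp only [this]
    rw [hβ']
    omega

lemma stepDown (hn : 1 ≤ n) {p : ℕ} (hp : 1 ≤ p)
    (hlen : l1.colLen 0 + l2.colLen 0 ≤ n) (hcore1 : l1.IsCore p)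
    (m : Fin n) (w : ℤ) (hw : pairWeight n l1 l2 m + rhoGL n m = w)
    (hb : (l2.colLen 0 : ℤ) + 1 ≤ w - p) :
    ∃ m' : Fin n, pairWeight n l1 l2 m' + rhoGL n m' = w - p := by
  by_cases hmid : w - p ≤ (n : ℤ) - l1.colLen 0
  · set v : ℕ := (w - p).toNat with hv
    have hvZ : (v : ℤ) = w - p := Int.toNat_of_nonneg (by omega)
    have hv1 : l2.colLen 0 + 1 ≤ v := by omega
    have hv2' : v + l1.colLen 0 ≤ n := by omega
    refine ⟨⟨n - v, by omega⟩, ?_⟩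
    rw [Zmid l1 l2 _ (by simp; omega) (by simp; omega)]
    simp only []
    push_cast
    omega
  · push_neg at hmid
    have hhead : (m : ℕ) < l1.colLen 0 := by
      by_contra h
      push_neg at h
      have := Zupper l1 l2 hlen m h
      omega
    have hwt := Zhead l1 l2 hlen m hhead
    have hβ : (p : ℤ) ≤ betaZ l1 m := by omega
    obtain ⟨m', hm', hβ'⟩ := core_beta_step l1 hp hcore1 hhead hβ
    refine ⟨⟨m', by omega⟩, ?_⟩
    rw [Zhead l1 l2 hlen _ (by simpa using hm')]
    simp only []
    rw [hβ']
    omega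

end Zones

/-- Lemma `zero`: suppose `λ¹, λ²` are `p`-cores, `i < j`, `a, l ≥ 1`,
`(λ+ρ)_i − (λ+ρ)_j = a + l·p`, and the tuple obtained from `λ+ρ` by replacing
the `i`-th entry by `(λ+ρ)_i − a` and the `j`-th entry by `(λ+ρ)_j + a` has
pairwise distinct entries.  Then (0-indexed) `i < ℓ(λ¹)` and `j ≥ n − ℓ(λ²)`;
moreover `(λ+ρ)_i − a > n − ℓ(λ¹)` and `(λ+ρ)_j + a ≤ ℓ(λ²)`. -/
theorem core_reflection_position (n p : ℕ) (hn : 1 ≤ n) (hp : 1 ≤ p)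
    (l1 l2 : YoungDiagram) (hlen : l1.colLen 0 + l2.colLen 0 ≤ n)
    (hcore1 : l1.IsCore p) (hcore2 : l2.IsCore p)
    (i j : Fin n) (hij : i < j)
    (a l : ℕ) (ha : 1 ≤ a) (hl : 1 ≤ l)
    (heq : (pairWeight n l1 l2 i + rhoGL n i) - (pairWeight n l1 l2 j + rhoGL n j)
      = (a : ℤ) + l * p)
    (hdist : Function.Injective (Function.update (Function.update
        (fun m => pairWeight n l1 l2 m + rhoGL n m)
        i (pairWeight n l1 l2 i + rhoGL n i - a))
        j (pairWeight n l1 l2 j + rhoGL n j + a))) :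
    (i : ℕ) < l1.colLen 0 ∧ n - l2.colLen 0 ≤ (j : ℕ) ∧
      ((n : ℤ) - l1.colLen 0) < pairWeight n l1 l2 i + rhoGL n i - a ∧
      pairWeight n l1 l2 j + rhoGL n j + a ≤ (l2.colLen 0 : ℤ) := by
  set f : Fin n → ℤ := fun m => pairWeight n l1 l2 m + rhoGL n m with hf
  set x : ℤ := f i with hx
  set y : ℤ := f j with hy
  have heq' : x - y = (a : ℤ) + l * p := heq
  set ν := Function.update (Function.update f i (x - a)) j (y + a) with hν
  have hijne : i ≠ j := Fin.ne_of_lt hij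
  have hνi : ν i = x - a := by
    rw [hν, Function.update_of_ne hijne, Function.update_self]
  have hνj : ν j = y + a := by rw [hν, Function.update_self]
  have hνm : ∀ m : Fin n, m ≠ i → m ≠ j → ν m = f m := by
    intro m hmi hmj
    rw [hν, Function.update_of_ne hmj, Function.update_of_ne hmi]
  have hpZ : (1 : ℤ) ≤ p := by exact_mod_cast hp
  have haZ : (1 : ℤ) ≤ a := by exact_mod_cast ha
  have hlZ : (1 : ℤ) ≤ l := by exact_mod_cast hl
  -- Goal 3
  have G3 : ((n : ℤ) - l1.colLen 0) < x - a := by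
    by_contra hcon
    push_neg at hcon
    have chain : ∀ s : ℕ, s ≤ l → ∃ m : Fin n, f m = y + s * p := by
      intro s
      induction s with
      | zero => exact fun _ => ⟨j, by push_cast; ring⟩
      | succ s ih =>
        intro hs
        obtain ⟨m, hm⟩ := ih (by omega)
        have hb : (y + s * p) + p ≤ (n : ℤ) - l1.colLen 0 := by
          have hsl : (s : ℤ) + 1 ≤ l := by exact_mod_cast hs
          nlinarith [hpZ, heq']
        obtain ⟨m', hm'⟩ := stepUp l1 l2 hn hp hlen hcore2 m _ hm hb
        have hm'' : f m' = y + s * p + p := hm'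
        exact ⟨m', by rw [hm'']; push_cast; ring⟩
    obtain ⟨m, hm⟩ := chain l le_rfl
    have hmx : f m = x - a := by rw [hm]; linarith
    have hmi : m ≠ i := by
      intro h; rw [h] at hmx; change x = x - a at hmx; omega
    have hmj : m ≠ j := by
      intro h; rw [h] at hmx
      change y = x - a at hmx
      nlinarith
    have : ν m = ν i := by rw [hνm m hmi hmj, hνi, hmx]
    exact hmi (hdist this)
  -- Goal 4
  have G4 : y + a ≤ (l2.colLen 0 : ℤ) := by
    by_contra hcon
    push_neg at hcon
    have chain : ∀ s : ℕ, s ≤ l → ∃ m : Fin n, f m = x - s * p := by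
      intro s
      induction s with
      | zero => exact fun _ => ⟨i, by push_cast; ring⟩
      | succ s ih =>
        intro hs
        obtain ⟨m, hm⟩ := ih (by omega)
        have hb : (l2.colLen 0 : ℤ) + 1 ≤ (x - s * p) - p := by
          have hsl : (s : ℤ) + 1 ≤ l := by exact_mod_cast hs
          nlinarith [hpZ, heq']
        obtain ⟨m', hm'⟩ := stepDown l1 l2 hn hp hlen hcore1 m _ hm hb
        have hm'' : f m' = x - s * p - p := hm'
        exact ⟨m', by rw [hm'']; push_cast; ring⟩
    obtain ⟨m, hm⟩ := chain l le_rfl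
    have hmx : f m = y + a := by rw [hm]; linarith
    have hmj : m ≠ j := by
      intro h; rw [h] at hmx; change y = y + a at hmx; omega
    have hmi : m ≠ i := by
      intro h; rw [h] at hmx
      change x = y + a at hmx
      nlinarith
    have : ν m = ν j := by rw [hνm m hmi hmj, hνj, hmx]
    exact hmj (hdist this)
  have G1 : (i : ℕ) < l1.colLen 0 := by
    by_contra h
    push_neg at h
    have := Zupper l1 l2 hlen i h
    change x ≤ _ at this
    omega
  have G2 : n - l2.colLen 0 ≤ (j : ℕ) := by
    by_contra h
    push_neg at h
    have h2 : (j : ℕ) + l2.colLen 0 < n := by omega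
    have := Zlower l1 l2 j h2
    change _ ≤ y at this
    omega
  exact ⟨G1, G2, G3, G4⟩
end

section
/- Let n, p ≥ 1, ρ = (n, n−1, …, 1), and let λ = [λ¹, λ²] with λ¹, λ² p-cores and ℓ(λ¹)+ℓ(λ²) ≤ n. For each pair (i, j, a, l) with 1 ≤ i ≤ ℓ(λ¹), n−ℓ(λ²) < j ≤ n, a, l ≥ 1, (λ+ρ)_i − (λ+ρ)_j = a + l·p, such that the tuple ξ obtained from λ+ρ by replacing its i-th entry by (λ+ρ)_i − a and its j-th entry by (λ+ρ)_j + a has distinct entries, define μ = sort(ξ) − ρ (sort in weakly decreasing order) and write μ = [μ¹, μ²]. Then μ¹ and μ² are partitions with μ¹ ⊊ λ¹ and μ² ⊊ λ², and the assignment (i, j, l) ↦ μ is injective on the set of such data. -/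
/-- `λ + ρ`. -/
def xrho (n : ℕ) (l1 l2 : YoungDiagram) : Fin n → ℤ :=
  fun i => pairWeight n l1 l2 i + rhoGL n i

/-- The tuple `s_{α,l}(λ+ρ)` for `α = ε_i − ε_j`: replace the `i`-th entry of
`λ+ρ` by `(λ+ρ)_i − a` and the `j`-th entry by `(λ+ρ)_j + a`. -/
def reflTuple (n : ℕ) (l1 l2 : YoungDiagram) (i j : Fin n) (a : ℕ) : Fin n → ℤ :=
  Function.update (Function.update (xrho n l1 l2) i (xrho n l1 l2 i - a))
    j (xrho n l1 l2 j + a)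

/-- The admissibility condition on the data `(i, j, a, l)` (0-indexed:
`i < ℓ(λ¹)`, `j ≥ n − ℓ(λ²)`). -/
def ReflData (n p : ℕ) (l1 l2 : YoungDiagram) (i j : Fin n) (a l : ℕ) : Prop :=
  (i : ℕ) < l1.colLen 0 ∧ n - l2.colLen 0 ≤ (j : ℕ) ∧ 1 ≤ a ∧ 1 ≤ l ∧
    xrho n l1 l2 i - xrho n l1 l2 j = (a : ℤ) + l * p ∧
    Function.Injective (reflTuple n l1 l2 i j a)

set_option linter.unusedSectionVars false

namespace Incl


open Finset

/-- A down-closed finset of naturals is an initial segment. -/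
lemma downclosed_eq_range (S : Finset ℕ)
    (hdc : ∀ r r' : ℕ, r' ≤ r → r ∈ S → r' ∈ S) : S = Finset.range S.card := by
  ext x
  constructor
  · intro hx
    have hsub : Finset.range (x + 1) ⊆ S := by
      intro r hr
      exact hdc x r (Nat.lt_succ_iff.mp (Finset.mem_range.mp hr)) hx
    have := Finset.card_le_card hsub
    simp only [Finset.card_range] at this
    simpa using this
  · intro hx
    by_contra hxS
    have hsub : S ⊆ Finset.range x := by
      intro r hr
      rw [Finset.mem_range]
      by_contra hge
      exact hxS (hdc r x (Nat.le_of_not_lt hge) hr)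
    have := Finset.card_le_card hsub
    simp only [Finset.card_range] at this
    rw [Finset.mem_range] at hx
    omega

section PartI

variable (μ : YoungDiagram) (N : ℕ)

/-- Beta numbers (first-column hook lengths padded to `N` beads). -/
def beta (q : ℕ) : ℕ := μ.rowLen q + (N - 1 - q)

lemma rowLen_eq_zero' {μ : YoungDiagram} {r : ℕ} (h : μ.colLen 0 ≤ r) : μ.rowLen r = 0 := by
  by_contra h'
  have : (r, 0) ∈ μ := YoungDiagram.mem_iff_lt_rowLen.mpr (Nat.pos_of_ne_zero h')
  rw [YoungDiagram.mem_iff_lt_colLen] at this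
  omega

lemma rowLen_pos' {μ : YoungDiagram} {r : ℕ} (h : r < μ.colLen 0) : 0 < μ.rowLen r := by
  have : (r, 0) ∈ μ := YoungDiagram.mem_iff_lt_colLen.mpr h
  rw [YoungDiagram.mem_iff_lt_rowLen] at this
  omega

lemma beta_chain {q q' : ℕ} (h : q ≤ q') (h' : q' < N) :
    beta μ N q' + (q' - q) ≤ beta μ N q := by
  have := μ.rowLen_anti q q' h
  unfold beta
  omega

variable {μ N}

lemma beta_lt {q q' : ℕ} (h : q < q') (h' : q' < N) : beta μ N q' < beta μ N q := by
  have := beta_chain μ N (le_of_lt h) h'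
  omega

/-- The key abacus lemma: if `w < beta q` is not a beta number, there is a cell in
row `q` with hook length `beta q - w`. -/
lemma exists_cell_of_not_beta (hL : μ.colLen 0 ≤ N)
    {q w : ℕ} (hq : q < N) (hw : w < beta μ N q)
    (hnotB : ∀ r, r < N → beta μ N r ≠ w) :
    ∃ c, (q, c) ∈ μ ∧ μ.hookLength q c = beta μ N q - w := by
  classical
  set r₀ : ℕ := ((Finset.range N).filter (fun r => w ≤ beta μ N r)).card with hr₀
  -- characterization
  have hchar : ∀ r, r < N → (w ≤ beta μ N r ↔ r < r₀) := by
    have hdc : ∀ r r' : ℕ, r' ≤ r →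
        r ∈ (Finset.range N).filter (fun r => w ≤ beta μ N r) →
        r' ∈ (Finset.range N).filter (fun r => w ≤ beta μ N r) := by
      intro r r' hle hr
      simp only [Finset.mem_filter, Finset.mem_range] at hr ⊢
      refine ⟨lt_of_le_of_lt hle hr.1, le_trans hr.2 ?_⟩
      have := beta_chain μ N hle hr.1
      omega
    have := downclosed_eq_range _ hdc
    intro r hr
    constructor
    · intro hwr
      have hmem : r ∈ (Finset.range N).filter (fun r => w ≤ beta μ N r) := by
        simp [Finset.mem_filter, Finset.mem_range, hr, hwr]
      rw [downclosed_eq_range _ hdc] at hmem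
      exact Finset.mem_range.mp hmem
    · intro hlt
      have : r ∈ Finset.range r₀ := Finset.mem_range.mpr hlt
      rw [hr₀, ← downclosed_eq_range _ hdc] at this
      simp only [Finset.mem_filter] at this
      exact this.2
  have hr₀N : r₀ ≤ N := by
    have := Finset.card_filter_le (Finset.range N) (fun r => w ≤ beta μ N r)
    simpa using this
  -- N - r₀ ≤ w
  have hNr : N - r₀ ≤ w := by
    have hcompl : ((Finset.range N).filter (fun r => ¬ w ≤ beta μ N r)).card = N - r₀ := by
      have := Finset.card_filter_add_card_filter_not (s := Finset.range N)
        (p := fun r => w ≤ beta μ N r)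
      simp only [Finset.card_range] at this
      omega
    have hinj : ((Finset.range N).filter (fun r => ¬ w ≤ beta μ N r)).card ≤
        (Finset.range w).card := by
      apply Finset.card_le_card_of_injOn (fun r => beta μ N r)
      · intro r hr
        simp only [Finset.coe_filter, Finset.mem_filter, Finset.mem_range, Set.mem_setOf_eq, not_le] at hr
        simp [Finset.mem_range, hr.2]
      · intro r hr r' hr' hb
        simp only [Finset.coe_filter, Finset.mem_range, Set.mem_setOf_eq] at hr hr'
        by_contra hne
        rcases Nat.lt_or_ge r r' with h | h
        · exact absurd hb (Nat.ne_of_gt (beta_lt h hr'.1))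
        · have : r' < r := by omega
          exact absurd hb.symm (Nat.ne_of_gt (beta_lt this hr.1))
    simp only [Finset.card_range] at hinj
    omega
  have hq0 : q < r₀ := (hchar q hq).mp (le_of_lt hw)
  set c : ℕ := w + r₀ - N with hc
  -- step 1
  have st1 : ∀ r, r < N → (c < μ.rowLen r ↔ r < r₀) := by
    intro r hr
    constructor
    · intro hcr
      by_contra hge
      push_neg at hge
      have hr₀r : r₀ ≤ r := hge
      have hr₀lt : r₀ < N := lt_of_le_of_lt hr₀r hr
      have hβr₀ : beta μ N r₀ < w := by
        by_contra h'
        push_neg at h'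
        exact absurd ((hchar r₀ hr₀lt).mp h') (lt_irrefl r₀)
      have hch := beta_chain μ N hr₀r hr
      have hβdef : beta μ N r = μ.rowLen r + (N - 1 - r) := rfl
      omega
    · intro hlt
      have h1 : 1 ≤ r₀ := by omega
      have hlast : r₀ - 1 < N := by omega
      have hβlast : w ≤ beta μ N (r₀ - 1) := (hchar _ hlast).mpr (by omega)
      have hne : beta μ N (r₀ - 1) ≠ w := hnotB _ hlast
      have hch := beta_chain μ N (show r ≤ r₀ - 1 by omega) hlast
      have hβdef : beta μ N r = μ.rowLen r + (N - 1 - r) := rfl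
      omega
  -- step 2 : colLen c = r₀
  have hcolle : μ.colLen c ≤ N := le_trans (μ.colLen_anti 0 c (Nat.zero_le c)) hL
  have st2 : μ.colLen c = r₀ := by
    rcases Nat.lt_trichotomy (μ.colLen c) r₀ with h | h | h
    · exfalso
      have hrn : μ.colLen c < N := by omega
      have := (st1 _ hrn).mpr h
      rw [← YoungDiagram.mem_iff_lt_rowLen, YoungDiagram.mem_iff_lt_colLen] at this
      omega
    · exact h
    · exfalso
      have hrn : r₀ < N := by omega
      have : (r₀, c) ∈ μ := YoungDiagram.mem_iff_lt_colLen.mpr h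
      rw [YoungDiagram.mem_iff_lt_rowLen] at this
      have := (st1 _ hrn).mp this
      omega
  have hcell : (q, c) ∈ μ := YoungDiagram.mem_iff_lt_rowLen.mpr ((st1 q hq).mpr hq0)
  refine ⟨c, hcell, ?_⟩
  have hcrow : c < μ.rowLen q := (st1 q hq).mpr hq0
  have hβdef : beta μ N q = μ.rowLen q + (N - 1 - q) := rfl
  unfold YoungDiagram.hookLength
  rw [st2]
  omega

/-- Closure of the beta-set of a `p`-core under subtracting multiples of `p`. -/
lemma core_beta_closed (hC : μ.IsCore p) (hL : μ.colLen 0 ≤ N) (hp : 1 ≤ p) :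
    ∀ m q, q < N → m * p ≤ beta μ N q → ∃ q', q' < N ∧ beta μ N q' = beta μ N q - m * p := by
  intro m
  induction m with
  | zero => intro q hq _; exact ⟨q, hq, by simp⟩
  | succ m ih =>
    intro q hq hle
    obtain ⟨q', hq', hβ⟩ := ih q hq (by nlinarith)
    have hple : p ≤ beta μ N q' := by
      have : (m + 1) * p = m * p + p := by ring
      omega
    by_cases hex : ∃ r, r < N ∧ beta μ N r = beta μ N q' - p
    · obtain ⟨r, hr, hβr⟩ := hex
      refine ⟨r, hr, ?_⟩
      rw [hβr, hβ]
      have : (m + 1) * p = m * p + p := by ring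
      omega
    · exfalso
      push_neg at hex
      obtain ⟨c, hcell, hhook⟩ := exists_cell_of_not_beta hL hq'
        (show beta μ N q' - p < beta μ N q' by omega)
        (fun r hr => hex r hr)
      have := hC (q', c) (YoungDiagram.mem_cells _ |>.mpr hcell)
      rw [hhook] at this
      have : ¬ p ∣ p := by
        convert this using 2
        omega
      exact this dvd_rfl

end PartI

section Main

variable {n p : ℕ} {l1 l2 : YoungDiagram} {i j : Fin n} {a l : ℕ}

lemma x_apply (q : Fin n) :
    xrho n l1 l2 q = (l1.rowLen q : ℤ) - (l2.rowLen (n - 1 - (q : ℕ)) : ℤ) + ((n : ℤ) - (q : ℕ)) :=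
  rfl

lemma x_anti {q q' : Fin n} (h : q < q') : xrho n l1 l2 q' < xrho n l1 l2 q := by
  rw [x_apply, x_apply]
  have hlt : (q : ℕ) < (q' : ℕ) := h
  have h1 := l1.rowLen_anti q q' (le_of_lt hlt)
  have h2 := l2.rowLen_anti (n - 1 - (q' : ℕ)) (n - 1 - (q : ℕ)) (by omega)
  have hq' : (q' : ℕ) < n := q'.isLt
  omega

lemma x_antitone {q q' : Fin n} (h : q ≤ q') : xrho n l1 l2 q' ≤ xrho n l1 l2 q := by
  rcases eq_or_lt_of_le h with rfl | h
  · exact le_refl _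
  · exact le_of_lt (x_anti h)

lemma x_inj {q q' : Fin n} (h : xrho n l1 l2 q = xrho n l1 l2 q') : q = q' := by
  rcases lt_trichotomy q q' with hlt | he | hgt
  · exact absurd h (ne_of_gt (x_anti hlt))
  · exact he
  · exact absurd h (ne_of_lt (x_anti hgt))

lemma x_zone1 {q : Fin n} (h : (q : ℕ) + l2.colLen 0 < n) :
    xrho n l1 l2 q = (l1.rowLen q : ℤ) + ((n : ℤ) - (q : ℕ)) := by
  rw [x_apply, rowLen_eq_zero' (show l2.colLen 0 ≤ n - 1 - (q : ℕ) by omega)]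
  push_cast; ring

lemma x_zone2 {q : Fin n} (h : l1.colLen 0 ≤ (q : ℕ)) :
    xrho n l1 l2 q = ((n : ℤ) - (q : ℕ)) - (l2.rowLen (n - 1 - (q : ℕ)) : ℤ) := by
  rw [x_apply, rowLen_eq_zero' h]
  push_cast; ring

lemma x_zone2_le {q : Fin n} (h : l1.colLen 0 ≤ (q : ℕ)) :
    xrho n l1 l2 q ≤ (n : ℤ) - (q : ℕ) := by
  rw [x_zone2 h]
  have : (0 : ℤ) ≤ (l2.rowLen (n - 1 - (q : ℕ)) : ℤ) := Int.natCast_nonneg _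
  omega

section Data

variable (hlen : l1.colLen 0 + l2.colLen 0 ≤ n) (hD : ReflData n p l1 l2 i j a l)

include hlen hD

lemma hij_lt : (i : ℕ) < (j : ℕ) := by
  obtain ⟨hi, hj, -, -, -, -⟩ := id hD
  have := j.isLt
  omega

lemma hij_ne : i ≠ j := fun h => absurd (congrArg Fin.val h) (Nat.ne_of_lt (hij_lt hlen hD))

lemma refl_apply_i : reflTuple n l1 l2 i j a i = xrho n l1 l2 i - a := by
  unfold reflTuple
  rw [Function.update_of_ne (hij_ne hlen hD), Function.update_self]

lemma refl_apply_j : reflTuple n l1 l2 i j a j = xrho n l1 l2 j + a := by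
  unfold reflTuple
  rw [Function.update_self]

omit hlen hD in
lemma refl_apply_other {q : Fin n} (h1 : q ≠ i) (h2 : q ≠ j) :
    reflTuple n l1 l2 i j a q = xrho n l1 l2 q := by
  unfold reflTuple
  rw [Function.update_of_ne h2, Function.update_of_ne h1]

lemma refl_i_eq : reflTuple n l1 l2 i j a i = xrho n l1 l2 j + (l : ℤ) * p := by
  obtain ⟨-, -, -, -, heq, -⟩ := id hD
  rw [refl_apply_i hlen hD]
  omega

lemma refl_j_eq : reflTuple n l1 l2 i j a j = xrho n l1 l2 i - (l : ℤ) * p := by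
  obtain ⟨-, -, -, -, heq, -⟩ := id hD
  rw [refl_apply_j hlen hD]
  omega

variable (hp : 1 ≤ p)
include hp

/-- Core condition on `l1` forces the lowered value to be small. -/
lemma xj_cases (hcore1 : l1.IsCore p) :
    reflTuple n l1 l2 i j a j ≤ 0 ∨
      ∃ q'' : ℕ, n - l2.colLen 0 ≤ q'' ∧ q'' < n ∧
        reflTuple n l1 l2 i j a j = (n : ℤ) - q'' := by
  obtain ⟨hi, hj, ha, hl, heq, hinj⟩ := id hD
  by_cases h0 : reflTuple n l1 l2 i j a j ≤ 0
  · exact Or.inl h0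
  right
  push_neg at h0
  have hin : (i : ℕ) < n := i.isLt
  have hxi : xrho n l1 l2 i = (l1.rowLen i : ℤ) + ((n : ℤ) - (i : ℕ)) :=
    x_zone1 (by omega)
  have hβi : (beta l1 n i : ℤ) = xrho n l1 l2 i - 1 := by
    unfold beta; rw [hxi]; push_cast; omega
  have hξj := refl_j_eq hlen hD
  have hcast : ((l * p : ℕ) : ℤ) = (l : ℤ) * p := by push_cast; ring
  have hlp : l * p ≤ beta l1 n i := by omega
  obtain ⟨q', hq'n, hβq'⟩ := core_beta_closed hcore1 (by omega) hp l i hin hlp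
  have hval : reflTuple n l1 l2 i j a j = (beta l1 n q' : ℤ) + 1 := by omega
  by_cases hz : q' + l2.colLen 0 < n
  · exfalso
    have hq'i : q' ≠ (i : ℕ) := by
      intro h
      subst h
      have h1 : 1 ≤ l * p := Nat.one_le_iff_ne_zero.mpr (by positivity)
      omega
    set Q : Fin n := ⟨q', hq'n⟩ with hQ
    have hxQ : xrho n l1 l2 Q = (l1.rowLen q' : ℤ) + ((n : ℤ) - q') := x_zone1 (by simp [hQ]; omega)
    have hQi : Q ≠ i := fun h => hq'i (congrArg Fin.val h)
    have hQj : Q ≠ j := by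
      intro h
      have : q' = (j : ℕ) := congrArg Fin.val h
      omega
    have : reflTuple n l1 l2 i j a Q = reflTuple n l1 l2 i j a j := by
      rw [refl_apply_other hQi hQj, hval, hxQ]
      unfold beta
      push_cast
      omega
    exact hQj (hinj this)
  · refine ⟨q', by omega, hq'n, ?_⟩
    have hrow : l1.rowLen q' = 0 := rowLen_eq_zero' (by omega)
    rw [hval]
    unfold beta
    rw [hrow]
    push_cast
    omega

lemma xj_le (hcore1 : l1.IsCore p) :
    reflTuple n l1 l2 i j a j ≤ (l2.colLen 0 : ℤ) := by
  rcases xj_cases hlen hD hp hcore1 with h | ⟨q'', h1, h2, h3⟩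
  · have : (0 : ℤ) ≤ (l2.colLen 0 : ℤ) := Int.natCast_nonneg _
    omega
  · have hL2n : l2.colLen 0 ≤ n := by omega
    rw [h3]
    omega

set_option maxHeartbeats 2000000 in
/-- Core condition on `l2` forces the raised value to be large. -/
lemma xi_ge (hcore2 : l2.IsCore p) :
    (n : ℤ) + 1 - (l1.colLen 0 : ℤ) ≤ reflTuple n l1 l2 i j a i := by
  obtain ⟨hi, hj, ha, hl, heq, hinj⟩ := id hD
  by_cases hbig : (n : ℤ) < reflTuple n l1 l2 i j a i
  · have h1 : 1 ≤ l1.colLen 0 := by omega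
    have : (1 : ℤ) ≤ (l1.colLen 0 : ℤ) := by exact_mod_cast h1
    omega
  push_neg at hbig
  have hjn : (j : ℕ) < n := j.isLt
  have hxj : xrho n l1 l2 j = ((n : ℤ) - (j : ℕ)) - (l2.rowLen (n - 1 - (j : ℕ)) : ℤ) :=
    x_zone2 (by omega)
  set r : ℕ := n - 1 - (j : ℕ) with hr
  have hβr : (beta l2 n r : ℤ) = (n : ℤ) - xrho n l1 l2 j := by
    unfold beta
    rw [hxj]
    push_cast
    omega
  have hξi := refl_i_eq hlen hD
  have hcast : ((l * p : ℕ) : ℤ) = (l : ℤ) * p := by push_cast; ring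
  have hlp : l * p ≤ beta l2 n r := by omega
  obtain ⟨r', hr'n, hβr'⟩ := core_beta_closed hcore2 (by omega) hp l r (by omega) hlp
  have hval : reflTuple n l1 l2 i j a i = (n : ℤ) - (beta l2 n r' : ℤ) := by omega
  by_cases hpos : 0 < l2.rowLen r'
  · exfalso
    have hr'L2 : r' < l2.colLen 0 := by
      by_contra hc
      push_neg at hc
      rw [rowLen_eq_zero' hc] at hpos
      omega
    set Q : Fin n := ⟨n - 1 - r', by omega⟩ with hQ
    have hQv : (Q : ℕ) = n - 1 - r' := rfl
    have hQz : l1.colLen 0 ≤ (Q : ℕ) := by rw [hQv]; omega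
    have hxQ : xrho n l1 l2 Q = ((n : ℤ) - (Q : ℕ)) - (l2.rowLen (n - 1 - (Q : ℕ)) : ℤ) :=
      x_zone2 hQz
    have hQi : Q ≠ i := by
      intro h
      have : (Q : ℕ) = (i : ℕ) := congrArg Fin.val h
      rw [hQv] at this
      omega
    have hQj : Q ≠ j := by
      intro h
      have hv : (Q : ℕ) = (j : ℕ) := congrArg Fin.val h
      rw [hQv] at hv
      have : r' = r := by omega
      subst this
      have h1 : 1 ≤ l * p := Nat.one_le_iff_ne_zero.mpr (by positivity)
      omega
    have heval : reflTuple n l1 l2 i j a Q = reflTuple n l1 l2 i j a i := by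
      rw [refl_apply_other hQi hQj, hval, hxQ]
      have h1 : n - 1 - (Q : ℕ) = r' := by rw [hQv]; omega
      rw [h1]
      unfold beta
      push_cast
      omega
    exact hQi (hinj heval)
  · push_neg at hpos
    have hrow : l2.rowLen r' = 0 := by omega
    have hval2 : reflTuple n l1 l2 i j a i = (r' : ℤ) + 1 := by
      rw [hval]
      unfold beta
      rw [hrow]
      push_cast
      omega
    by_cases hr'' : n ≤ r' + l1.colLen 0
    · rw [hval2]
      have h1 : 1 ≤ l1.colLen 0 := by omega
      omega
    · exfalso
      push_neg at hr''
      set Q : Fin n := ⟨n - 1 - r', by omega⟩ with hQ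
      have hQv : (Q : ℕ) = n - 1 - r' := rfl
      have hQz : l1.colLen 0 ≤ (Q : ℕ) := by rw [hQv]; omega
      have hxQ : xrho n l1 l2 Q = ((n : ℤ) - (Q : ℕ)) - (l2.rowLen (n - 1 - (Q : ℕ)) : ℤ) :=
        x_zone2 hQz
      have hQi : Q ≠ i := by
        intro h
        have : (Q : ℕ) = (i : ℕ) := congrArg Fin.val h
        rw [hQv] at this
        omega
      have hQj : Q ≠ j := by
        intro h
        have hv : (Q : ℕ) = (j : ℕ) := congrArg Fin.val h
        rw [hQv] at hv
        have : r' = r := by omega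
        subst this
        have h1 : 1 ≤ l * p := Nat.one_le_iff_ne_zero.mpr (by positivity)
        omega
      have heval : reflTuple n l1 l2 i j a Q = reflTuple n l1 l2 i j a i := by
        rw [refl_apply_other hQi hQj, hval2, hxQ]
        have h1 : n - 1 - (Q : ℕ) = r' := by rw [hQv]; omega
        rw [h1, hrow]
        push_cast
        omega
      exact hQi (hinj heval)

set_option maxHeartbeats 1000000 in
lemma xj_lt_xi (hcore1 : l1.IsCore p) (hcore2 : l2.IsCore p) :
    reflTuple n l1 l2 i j a j < reflTuple n l1 l2 i j a i := by
  have h1 := xj_le hlen hD hp hcore1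
  have h2 := xi_ge hlen hD hp hcore2
  have h3 : (l1.colLen 0 : ℤ) + (l2.colLen 0 : ℤ) ≤ (n : ℤ) := by exact_mod_cast hlen
  omega

end Data

section Count

open Finset

lemma card_val_lt {k : ℕ} (hk : k ≤ n) :
    ((univ : Finset (Fin n)).filter fun q : Fin n => (q : ℕ) < k).card = k := by
  classical
  have himg : ((univ : Finset (Fin n)).filter fun q : Fin n => (q : ℕ) < k).image Fin.val
      = Finset.range k := by
    ext r
    simp only [Finset.mem_image, Finset.mem_filter, Finset.mem_univ, true_and, Finset.mem_range]
    constructor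
    · rintro ⟨q, hq, rfl⟩; exact hq
    · intro hr; exact ⟨⟨r, lt_of_lt_of_le hr hk⟩, hr, rfl⟩
  have hinj := Finset.card_image_of_injective
    ((univ : Finset (Fin n)).filter fun q : Fin n => (q : ℕ) < k) (Fin.val_injective)
  rw [himg, Finset.card_range] at hinj
  omega

lemma card_val_le {k : ℕ} (hk : k < n) :
    ((univ : Finset (Fin n)).filter fun q : Fin n => (q : ℕ) ≤ k).card = k + 1 := by
  have : ((univ : Finset (Fin n)).filter fun q : Fin n => (q : ℕ) ≤ k)
      = ((univ : Finset (Fin n)).filter fun q : Fin n => (q : ℕ) < k + 1) := by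
    apply Finset.filter_congr
    intro q _
    simp [Nat.lt_succ_iff]
  rw [this]
  exact card_val_lt hk

lemma mem_iff_lt_card_of_downclosed (S : Finset (Fin n))
    (hdc : ∀ q q' : Fin n, q' ≤ q → q ∈ S → q' ∈ S) (q : Fin n) :
    q ∈ S ↔ (q : ℕ) < S.card := by
  constructor
  · intro hq
    have hsub : ((univ : Finset (Fin n)).filter fun r : Fin n => (r : ℕ) ≤ (q : ℕ)) ⊆ S := by
      intro r hr
      simp only [Finset.mem_filter, Finset.mem_univ, true_and] at hr
      exact hdc q r (Fin.le_def.mpr hr) hq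
    have := Finset.card_le_card hsub
    rw [card_val_le q.isLt] at this
    omega
  · intro hq
    by_contra hqS
    have hsub : S ⊆ ((univ : Finset (Fin n)).filter fun r : Fin n => (r : ℕ) < (q : ℕ)) := by
      intro r hr
      simp only [Finset.mem_filter, Finset.mem_univ, true_and]
      by_contra hge
      exact hqS (hdc r q (Fin.le_def.mpr (Nat.le_of_not_lt hge)) hr)
    have := Finset.card_le_card hsub
    rw [card_val_lt (le_of_lt q.isLt)] at this
    omega

variable (n l1 l2 i j a) in
/-- The number of entries of the reflected tuple exceeding `v`. -/
def cnt (v : ℤ) : ℕ :=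
  ((univ : Finset (Fin n)).filter fun q => v < reflTuple n l1 l2 i j a q).card

variable {σ : Equiv.Perm (Fin n)}
variable (hσ : StrictAnti (reflTuple n l1 l2 i j a ∘ ⇑σ))

include hσ in
lemma master (v : ℤ) (q : Fin n) :
    v < reflTuple n l1 l2 i j a (σ q) ↔ (q : ℕ) < cnt n l1 l2 i j a v := by
  classical
  have hcard : ((univ : Finset (Fin n)).filter fun q => v < reflTuple n l1 l2 i j a (σ q)).card
      = cnt n l1 l2 i j a v := by
    unfold cnt
    apply Finset.card_bij (fun q _ => σ q)
    · intro q hq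
      simp only [Finset.mem_filter, Finset.mem_univ, true_and] at hq ⊢
      exact hq
    · intro q1 h1 q2 h2 he
      exact σ.injective he
    · intro q hq
      simp only [Finset.mem_filter, Finset.mem_univ, true_and] at hq
      exact ⟨σ.symm q, by simp [hq], by simp⟩
  have hdc : ∀ q q' : Fin n, q' ≤ q →
      q ∈ ((univ : Finset (Fin n)).filter fun q => v < reflTuple n l1 l2 i j a (σ q)) →
      q' ∈ ((univ : Finset (Fin n)).filter fun q => v < reflTuple n l1 l2 i j a (σ q)) := by
    intro q q' hle hq
    simp only [Finset.mem_filter, Finset.mem_univ, true_and] at hq ⊢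
    rcases eq_or_lt_of_le hle with rfl | hlt
    · exact hq
    · have := hσ hlt
      simp only [Function.comp_apply] at this
      omega
  have := mem_iff_lt_card_of_downclosed _ hdc q
  simp only [Finset.mem_filter, Finset.mem_univ, true_and] at this
  rw [this, hcard]

include hσ in
lemma pos_eq (q0 : Fin n) :
    ((σ.symm q0 : Fin n) : ℕ) = cnt n l1 l2 i j a (reflTuple n l1 l2 i j a q0) := by
  set v := reflTuple n l1 l2 i j a q0 with hv
  have h1 : ¬ ((σ.symm q0 : Fin n) : ℕ) < cnt n l1 l2 i j a v := by
    rw [← master hσ v (σ.symm q0)]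
    simp [← hv]
  have h2 : ¬ cnt n l1 l2 i j a v < ((σ.symm q0 : Fin n) : ℕ) := by
    intro hlt
    have hcn : cnt n l1 l2 i j a v < n := lt_trans hlt (σ.symm q0).isLt
    set q1 : Fin n := ⟨cnt n l1 l2 i j a v, hcn⟩ with hq1
    have hlt' : q1 < σ.symm q0 := hlt
    have := hσ hlt'
    simp only [Function.comp_apply, Equiv.apply_symm_apply, ← hv] at this
    have h3 : v < reflTuple n l1 l2 i j a (σ q1) := this
    rw [master hσ] at h3
    simp [hq1] at h3
  omega

-- upper bound: contributors land in an initial segment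
lemma cnt_le {v : ℤ} {k : ℕ} (hk : k ≤ n)
    (h3 : ¬ v < reflTuple n l1 l2 i j a j)
    (h1 : ∀ q : Fin n, q ≠ j → v < reflTuple n l1 l2 i j a q → (q : ℕ) < k) :
    cnt n l1 l2 i j a v ≤ k := by
  unfold cnt
  calc ((univ : Finset (Fin n)).filter fun q => v < reflTuple n l1 l2 i j a q).card
      ≤ ((univ : Finset (Fin n)).filter fun q : Fin n => (q : ℕ) < k).card := by
        apply Finset.card_le_card
        intro q hq
        simp only [Finset.mem_filter, Finset.mem_univ, true_and] at hq ⊢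
        by_cases hqj : q = j
        · subst hqj; exact absurd hq h3
        · exact h1 q hqj hq
    _ = k := card_val_lt hk

lemma cnt_add_one_le {v : ℤ} {k : ℕ} (hk : k ≤ n) (hik : (i : ℕ) < k)
    (h3 : ¬ v < reflTuple n l1 l2 i j a j)
    (h3i : ¬ v < reflTuple n l1 l2 i j a i)
    (h1 : ∀ q : Fin n, q ≠ j → q ≠ i → v < reflTuple n l1 l2 i j a q → (q : ℕ) < k) :
    cnt n l1 l2 i j a v + 1 ≤ k := by
  have hsub : ((univ : Finset (Fin n)).filter fun q => v < reflTuple n l1 l2 i j a q)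
      ⊆ ((univ : Finset (Fin n)).filter fun q : Fin n => (q : ℕ) < k).erase i := by
    intro q hq
    simp only [Finset.mem_filter, Finset.mem_univ, true_and] at hq
    rw [Finset.mem_erase]
    by_cases hqj : q = j
    · subst hqj; exact absurd hq h3
    by_cases hqi : q = i
    · subst hqi; exact absurd hq h3i
    refine ⟨hqi, ?_⟩
    simp only [Finset.mem_filter, Finset.mem_univ, true_and]
    exact h1 q hqj hqi hq
  have hmem : i ∈ ((univ : Finset (Fin n)).filter fun q : Fin n => (q : ℕ) < k) := by
    simp [hik]
  have := Finset.card_le_card hsub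
  rw [Finset.card_erase_of_mem hmem, card_val_lt hk] at this
  unfold cnt
  omega

lemma le_cnt {v : ℤ} {k : ℕ} (hk : k ≤ n)
    (h : ∀ q : Fin n, (q : ℕ) < k → v < reflTuple n l1 l2 i j a q) :
    k ≤ cnt n l1 l2 i j a v := by
  have hsub : ((univ : Finset (Fin n)).filter fun q : Fin n => (q : ℕ) < k)
      ⊆ ((univ : Finset (Fin n)).filter fun q => v < reflTuple n l1 l2 i j a q) := by
    intro q hq
    simp only [Finset.mem_filter, Finset.mem_univ, true_and] at hq ⊢
    exact h q hq
  have := Finset.card_le_card hsub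
  rw [card_val_lt hk] at this
  unfold cnt
  omega

lemma le_cnt_erase {v : ℤ} {k : ℕ} (hk : k < n) (hik : (i : ℕ) ≤ k)
    (h : ∀ q : Fin n, (q : ℕ) ≤ k → q ≠ i → v < reflTuple n l1 l2 i j a q) :
    k ≤ cnt n l1 l2 i j a v := by
  have hsub : ((univ : Finset (Fin n)).filter fun q : Fin n => (q : ℕ) ≤ k).erase i
      ⊆ ((univ : Finset (Fin n)).filter fun q => v < reflTuple n l1 l2 i j a q) := by
    intro q hq
    rw [Finset.mem_erase] at hq
    obtain ⟨hqi, hq⟩ := hq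
    simp only [Finset.mem_filter, Finset.mem_univ, true_and] at hq ⊢
    exact h q hq hqi
  have hmem : i ∈ ((univ : Finset (Fin n)).filter fun q : Fin n => (q : ℕ) ≤ k) := by
    simp [hik]
  have := Finset.card_le_card hsub
  rw [Finset.card_erase_of_mem hmem, card_val_le hk] at this
  unfold cnt
  omega

end Count

section Build

open Finset

lemma rowLen_ofRowLens_zero {w : List ℕ} {hw : w.SortedGE} {r : ℕ} (h : w.length ≤ r) :
    (YoungDiagram.ofRowLens w hw).rowLen r = 0 := by
  by_contra h'
  have hmem : (r, 0) ∈ YoungDiagram.ofRowLens w hw :=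
    YoungDiagram.mem_iff_lt_rowLen.mpr (Nat.pos_of_ne_zero h')
  rw [YoungDiagram.mem_ofRowLens] at hmem
  obtain ⟨hlt, -⟩ := hmem
  omega

end Build

section Final

open Finset

variable {σ : Equiv.Perm (Fin n)}

set_option maxHeartbeats 1000000 in
lemma construction (hp : 1 ≤ p)
    (hlen : l1.colLen 0 + l2.colLen 0 ≤ n)
    (hcore1 : l1.IsCore p) (hcore2 : l2.IsCore p)
    (hD : ReflData n p l1 l2 i j a l)
    (hσ : StrictAnti (reflTuple n l1 l2 i j a ∘ ⇑σ)) :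
    ∃ m1 m2 : YoungDiagram, m1.colLen 0 + m2.colLen 0 ≤ n ∧
      (∀ q : Fin n, reflTuple n l1 l2 i j a (σ q) - rhoGL n q = pairWeight n m1 m2 q) ∧
      m1 ≤ l1 ∧ m1 ≠ l1 ∧ m2 ≤ l2 ∧ m2 ≠ l2 := by
  classical
  obtain ⟨hi, hj, ha, hl, heq, hinj⟩ := id hD
  have hijlt : (i : ℕ) < (j : ℕ) := hij_lt hlen hD
  have hL1n : l1.colLen 0 ≤ n := by omega
  have hL2n : l2.colLen 0 ≤ n := by omega
  have hξi_lo : (n : ℤ) + 1 - (l1.colLen 0 : ℤ) ≤ reflTuple n l1 l2 i j a i :=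
    xi_ge hlen hD hp hcore2
  have hξj_hi : reflTuple n l1 l2 i j a j ≤ (l2.colLen 0 : ℤ) := xj_le hlen hD hp hcore1
  have hξji : reflTuple n l1 l2 i j a j < reflTuple n l1 l2 i j a i :=
    xj_lt_xi hlen hD hp hcore1 hcore2
  have hξii : reflTuple n l1 l2 i j a i = xrho n l1 l2 i - a := refl_apply_i hlen hD
  have hξjj : reflTuple n l1 l2 i j a j = xrho n l1 l2 j + a := refl_apply_j hlen hD
  have hcast : ((l * p : ℕ) : ℤ) = (l : ℤ) * p := by push_cast; ring
  have hcastlen : (l1.colLen 0 : ℤ) + (l2.colLen 0 : ℤ) ≤ (n : ℤ) := by exact_mod_cast hlen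
  have hL1pos : 1 ≤ l1.colLen 0 := by omega
  have hL2pos : 1 ≤ l2.colLen 0 := by
    have := j.isLt; omega
  set s : Fin n := σ.symm i with hs_def
  set t : Fin n := σ.symm j with ht_def
  have hs : (s : ℕ) = cnt n l1 l2 i j a (reflTuple n l1 l2 i j a i) := pos_eq hσ i
  have ht : (t : ℕ) = cnt n l1 l2 i j a (reflTuple n l1 l2 i j a j) := pos_eq hσ j
  have hys : reflTuple n l1 l2 i j a (σ s) = reflTuple n l1 l2 i j a i := by
    rw [hs_def]; simp
  have hyt : reflTuple n l1 l2 i j a (σ t) = reflTuple n l1 l2 i j a j := by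
    rw [ht_def]; simp
  -- s < L1
  have hsL1 : (s : ℕ) < l1.colLen 0 := by
    have harg : ∀ q : Fin n, q ≠ j → q ≠ i →
        reflTuple n l1 l2 i j a i < reflTuple n l1 l2 i j a q → (q : ℕ) < l1.colLen 0 := by
      intro q hqj hqi hlt
      by_contra hge
      push_neg at hge
      have hq2 := x_zone2_le (l1 := l1) (l2 := l2) (q := q) hge
      have : reflTuple n l1 l2 i j a q = xrho n l1 l2 q := refl_apply_other hqi hqj
      have hq3 : (l1.colLen 0 : ℤ) ≤ (q : ℕ) := by omega
      omega
    have h6 := cnt_add_one_le (v := reflTuple n l1 l2 i j a i) (k := l1.colLen 0)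
      hL1n hi (by omega) (by omega) harg
    omega
  -- i ≤ s
  have his : (i : ℕ) ≤ (s : ℕ) := by
    rw [hs]
    apply le_cnt (by omega)
    intro q hq
    have hqi : q ≠ i := fun h => by rw [h] at hq; omega
    have hqj : q ≠ j := fun h => by rw [h] at hq; omega
    rw [refl_apply_other hqi hqj]
    have := x_anti (l1 := l1) (l2 := l2) (show q < i from hq)
    omega
  -- s ≥ n - ξ i
  have hsge : (n : ℤ) - reflTuple n l1 l2 i j a i ≤ (s : ℕ) := by
    by_cases hni : (n : ℤ) - reflTuple n l1 l2 i j a i ≤ 0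
    · have : (0 : ℤ) ≤ (s : ℕ) := Int.natCast_nonneg _
      omega
    push_neg at hni
    set d : ℕ := ((n : ℤ) - reflTuple n l1 l2 i j a i).toNat with hd_def
    have hd : (d : ℤ) = (n : ℤ) - reflTuple n l1 l2 i j a i := by
      rw [hd_def]; omega
    have hdL1 : d + 1 ≤ l1.colLen 0 := by
      have : (d : ℤ) + 1 ≤ (l1.colLen 0 : ℤ) := by omega
      exact_mod_cast this
    have hdn : d < n := by omega
    have key : ∀ q : Fin n, (q : ℕ) ≤ d → q ≠ i → reflTuple n l1 l2 i j a i <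
        reflTuple n l1 l2 i j a q := by
      intro q hqd hqi
      have hqj : q ≠ j := by
        intro h
        have : (q : ℕ) = (j : ℕ) := congrArg Fin.val h
        omega
      rw [refl_apply_other hqi hqj]
      have hz : xrho n l1 l2 q = (l1.rowLen q : ℤ) + ((n : ℤ) - (q : ℕ)) :=
        x_zone1 (by omega)
      rcases Nat.lt_or_ge (q : ℕ) d with hlt | hge
      · have : (0 : ℤ) ≤ (l1.rowLen q : ℤ) := Int.natCast_nonneg _
        have hq' : ((q : ℕ) : ℤ) ≤ (d : ℤ) - 1 := by omega
        omega
      · have hqd' : (q : ℕ) = d := by omega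
        have hpos : 0 < l1.rowLen q := rowLen_pos' (by omega)
        have : (1 : ℤ) ≤ (l1.rowLen q : ℤ) := by exact_mod_cast hpos
        have hq' : ((q : ℕ) : ℤ) = (d : ℤ) := by exact_mod_cast hqd'
        omega
    rcases Nat.lt_or_ge (i : ℕ) d with hcase | hcase
    · have := le_cnt_erase (v := reflTuple n l1 l2 i j a i) (k := d) hdn (by omega)
        (fun q hq hqi => key q hq hqi)
      omega
    · have : d ≤ cnt n l1 l2 i j a (reflTuple n l1 l2 i j a i) := by
        apply le_cnt (by omega)
        intro q hq
        exact key q (by omega) (fun h => by rw [h] at hq; omega)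
      omega
  -- t ≤ j
  have htj : (t : ℕ) ≤ (j : ℕ) := by
    rw [ht]
    apply cnt_le (le_of_lt j.isLt) (by omega)
    intro q hqj hlt
    by_cases hqi : q = i
    · rw [hqi]; exact hijlt
    rw [refl_apply_other hqi hqj] at hlt
    by_contra hge
    push_neg at hge
    have : xrho n l1 l2 q ≤ xrho n l1 l2 j :=
      x_antitone (Fin.le_def.mpr hge)
    omega
  -- n - L2 ≤ t
  have htge : n - l2.colLen 0 ≤ (t : ℕ) := by
    rw [ht]
    apply le_cnt (by omega)
    intro q hq
    by_cases hqi : q = i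
    · rw [hqi]; exact hξji
    have hqj : q ≠ j := by
      intro h
      have : (q : ℕ) = (j : ℕ) := congrArg Fin.val h
      omega
    rw [refl_apply_other hqi hqj]
    have hz : xrho n l1 l2 q = (l1.rowLen q : ℤ) + ((n : ℤ) - (q : ℕ)) :=
      x_zone1 (by omega)
    have h0 : (0 : ℤ) ≤ (l1.rowLen q : ℤ) := Int.natCast_nonneg _
    have hq' : ((q : ℕ) : ℤ) + (l2.colLen 0 : ℤ) ≤ (n : ℤ) - 1 := by omega
    omega
  -- t + ξ j ≤ n
  have htub : ((t : ℕ) : ℤ) + reflTuple n l1 l2 i j a j ≤ (n : ℤ) := by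
    rcases xj_cases hlen hD hp hcore1 with h0 | ⟨q'', hq1, hq2, hq3⟩
    · have : ((t : ℕ) : ℤ) ≤ (n : ℤ) := by exact_mod_cast le_of_lt t.isLt
      omega
    · have hcnt : cnt n l1 l2 i j a (reflTuple n l1 l2 i j a j) ≤ q'' := by
        apply cnt_le (by omega) (by omega)
        intro q hqj hlt
        by_cases hqi : q = i
        · have hv : (q : ℕ) = (i : ℕ) := congrArg Fin.val hqi
          omega
        rw [refl_apply_other hqi hqj] at hlt
        set Q : Fin n := ⟨q'', hq2⟩ with hQ
        have hz := x_zone2_le (l1 := l1) (l2 := l2) (q := Q) (by simp [hQ]; omega)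
        by_contra hge
        push_neg at hge
        have : xrho n l1 l2 q ≤ xrho n l1 l2 Q := x_antitone (Fin.le_def.mpr (by simp [hQ]; omega))
        simp only [hQ] at hz this
        omega
      rw [hq3]
      have : ((t : ℕ) : ℤ) ≤ (q'' : ℤ) := by exact_mod_cast (by omega : (t : ℕ) ≤ q'')
      omega
  -- ξ i < x s
  have hP7 : reflTuple n l1 l2 i j a i < xrho n l1 l2 s := by
    by_cases hsi : s = i
    · rw [hsi]; omega
    have hsj : s ≠ j := by
      intro h
      have : (s : ℕ) = (j : ℕ) := congrArg Fin.val h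
      omega
    rcases lt_trichotomy (reflTuple n l1 l2 i j a i) (xrho n l1 l2 s) with h | h | h
    · exact h
    · exfalso
      have : reflTuple n l1 l2 i j a s = reflTuple n l1 l2 i j a i := by
        rw [refl_apply_other hsi hsj, ← h]
      exact hsi (hinj this)
    · exfalso
      have hisx : (i : ℕ) < (s : ℕ) := by
        rcases Nat.lt_or_ge (i : ℕ) (s : ℕ) with h' | h'
        · exact h'
        · have : (i : ℕ) = (s : ℕ) := by omega
          exact absurd (Fin.ext this.symm) hsi
      have harg : ∀ q : Fin n, q ≠ j → q ≠ i →
          reflTuple n l1 l2 i j a i < reflTuple n l1 l2 i j a q → (q : ℕ) < (s : ℕ) := by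
        intro q hqj hqi hlt
        rw [refl_apply_other hqi hqj] at hlt
        by_contra hge
        push_neg at hge
        have : xrho n l1 l2 q ≤ xrho n l1 l2 s := x_antitone (Fin.le_def.mpr hge)
        omega
      have h6 := cnt_add_one_le (v := reflTuple n l1 l2 i j a i) (k := (s : ℕ))
        (le_of_lt s.isLt) hisx (by omega) (by omega) harg
      omega
  -- x t < ξ j
  have hP6 : xrho n l1 l2 t < reflTuple n l1 l2 i j a j := by
    by_cases htj' : t = j
    · rw [htj']; omega
    have hti : t ≠ i := by
      intro h
      have : (t : ℕ) = (i : ℕ) := congrArg Fin.val h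
      omega
    rcases lt_trichotomy (xrho n l1 l2 t) (reflTuple n l1 l2 i j a j) with h | h | h
    · exact h
    · exfalso
      have : reflTuple n l1 l2 i j a t = reflTuple n l1 l2 i j a j := by
        rw [refl_apply_other hti htj', h]
      exact htj' (hinj this)
    · exfalso
      have htjx : (t : ℕ) < (j : ℕ) := by
        rcases Nat.lt_or_ge (t : ℕ) (j : ℕ) with h' | h'
        · exact h'
        · have : (t : ℕ) = (j : ℕ) := by omega
          exact absurd (Fin.ext this) htj'
      have h6 : (t : ℕ) + 1 ≤ cnt n l1 l2 i j a (reflTuple n l1 l2 i j a j) := by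
        apply le_cnt (by omega)
        intro q hq
        by_cases hqi : q = i
        · rw [hqi]; omega
        have hqj : q ≠ j := by
          intro hh
          have : (q : ℕ) = (j : ℕ) := congrArg Fin.val hh
          omega
        rw [refl_apply_other hqi hqj]
        have : xrho n l1 l2 t ≤ xrho n l1 l2 q := x_antitone (Fin.le_def.mpr (by omega))
        omega
      omega
  -- Claim A
  have hA : ∀ q : Fin n, (q : ℕ) < (t : ℕ) → reflTuple n l1 l2 i j a (σ q) ≤ xrho n l1 l2 q := by
    intro q hqt
    have hxqj : ¬ xrho n l1 l2 q < reflTuple n l1 l2 i j a j := by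
      intro hcon
      have hnq : n - l2.colLen 0 ≤ (q : ℕ) := by
        by_contra hcon2
        push_neg at hcon2
        have hz : xrho n l1 l2 q = (l1.rowLen q : ℤ) + ((n : ℤ) - (q : ℕ)) :=
          x_zone1 (by omega)
        have h0 : (0 : ℤ) ≤ (l1.rowLen q : ℤ) := Int.natCast_nonneg _
        have hq' : ((q : ℕ) : ℤ) + (l2.colLen 0 : ℤ) ≤ (n : ℤ) - 1 := by omega
        omega
      have : cnt n l1 l2 i j a (reflTuple n l1 l2 i j a j) ≤ (q : ℕ) := by
        apply cnt_le (le_of_lt q.isLt) (by omega)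
        intro q' hq'j hlt
        by_cases hq'i : q' = i
        · have hv : (q' : ℕ) = (i : ℕ) := congrArg Fin.val hq'i
          omega
        rw [refl_apply_other hq'i hq'j] at hlt
        by_contra hge
        push_neg at hge
        have := x_antitone (l1 := l1) (l2 := l2) (Fin.le_def.mpr hge : q ≤ q')
        omega
      omega
    have hcnt : cnt n l1 l2 i j a (xrho n l1 l2 q) ≤ (q : ℕ) := by
      apply cnt_le (le_of_lt q.isLt) hxqj
      intro q' hq'j hlt
      by_cases hq'i : q' = i
      · rw [hq'i] at hlt
        have hv : (q' : ℕ) = (i : ℕ) := congrArg Fin.val hq'i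
        by_contra hge
        push_neg at hge
        have := x_antitone (l1 := l1) (l2 := l2)
          (Fin.le_def.mpr (show (q : ℕ) ≤ (i : ℕ) by omega) : q ≤ i)
        omega
      rw [refl_apply_other hq'i hq'j] at hlt
      by_contra hge
      push_neg at hge
      have := x_antitone (l1 := l1) (l2 := l2) (Fin.le_def.mpr hge : q ≤ q')
      omega
    have := master hσ (xrho n l1 l2 q) q
    omega
  -- Claim B
  have hB : ∀ q : Fin n, (s : ℕ) < (q : ℕ) → xrho n l1 l2 q ≤ reflTuple n l1 l2 i j a (σ q) := by
    intro q hsq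
    have hcnt : (q : ℕ) + 1 ≤ cnt n l1 l2 i j a (xrho n l1 l2 q - 1) := by
      apply le_cnt q.isLt
      intro q' hq'
      by_cases hq'j : q' = j
      · rw [hq'j]
        have hv : (q' : ℕ) = (j : ℕ) := congrArg Fin.val hq'j
        have : xrho n l1 l2 q ≤ xrho n l1 l2 j :=
          x_antitone (Fin.le_def.mpr (show (j : ℕ) ≤ (q : ℕ) by omega))
        omega
      by_cases hq'i : q' = i
      · rw [hq'i]
        have hv : (q' : ℕ) = (i : ℕ) := congrArg Fin.val hq'i
        by_contra hcon
        push_neg at hcon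
        have hkey : (q : ℕ) ≤ cnt n l1 l2 i j a (reflTuple n l1 l2 i j a i) := by
          apply le_cnt_erase q.isLt (by omega)
          intro q'' hq'' hq''i
          by_cases hq''j : q'' = j
          · rw [hq''j]
            have hv2 : (q'' : ℕ) = (j : ℕ) := congrArg Fin.val hq''j
            have : xrho n l1 l2 q ≤ xrho n l1 l2 j :=
              x_antitone (Fin.le_def.mpr (show (j : ℕ) ≤ (q : ℕ) by omega))
            omega
          rw [refl_apply_other hq''i hq''j]
          have : xrho n l1 l2 q ≤ xrho n l1 l2 q'' := x_antitone (Fin.le_def.mpr (by omega))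
          omega
        omega
      rw [refl_apply_other hq'i hq'j]
      have : xrho n l1 l2 q ≤ xrho n l1 l2 q' := x_antitone (Fin.le_def.mpr (by omega))
      omega
    have := master hσ (xrho n l1 l2 q - 1) q
    omega
  -- N4
  have hN4 : reflTuple n l1 l2 i j a (σ i) ≤ xrho n l1 l2 i - 1 := by
    have hcnt : cnt n l1 l2 i j a (xrho n l1 l2 i - 1) ≤ (i : ℕ) := by
      apply cnt_le (le_of_lt i.isLt) (by omega)
      intro q hqj hlt
      by_cases hqi : q = i
      · rw [hqi] at hlt; omega
      rw [refl_apply_other hqi hqj] at hlt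
      by_contra hge
      push_neg at hge
      rcases Nat.lt_or_ge (i : ℕ) (q : ℕ) with h' | h'
      · have := x_anti (l1 := l1) (l2 := l2) (show i < q from h')
        omega
      · have : (q : ℕ) = (i : ℕ) := by omega
        exact hqi (Fin.ext this)
    have := master hσ (xrho n l1 l2 i - 1) i
    omega
  -- N5
  have hN5 : xrho n l1 l2 j < reflTuple n l1 l2 i j a (σ j) := by
    have hcnt : (j : ℕ) + 1 ≤ cnt n l1 l2 i j a (xrho n l1 l2 j) := by
      apply le_cnt j.isLt
      intro q hq
      by_cases hqi : q = i
      · rw [hqi]; omega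
      by_cases hqj : q = j
      · rw [hqj]; omega
      rw [refl_apply_other hqi hqj]
      rcases Nat.lt_or_ge (q : ℕ) (j : ℕ) with h' | h'
      · have := x_anti (l1 := l1) (l2 := l2) (show q < j from h')
        omega
      · exact absurd (Fin.ext (by omega : (q : ℕ) = (j : ℕ))) hqj
    have := master hσ (xrho n l1 l2 j) j
    omega
  -- chain for y
  have ychain : ∀ (d : ℕ) (q q' : Fin n), (q : ℕ) + d = (q' : ℕ) →
      reflTuple n l1 l2 i j a (σ q') + (d : ℤ) ≤ reflTuple n l1 l2 i j a (σ q) := by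
    intro d
    induction d with
    | zero =>
      intro q q' h
      have : q = q' := Fin.ext (by omega)
      subst this
      simp
    | succ d ih =>
      intro q q' h
      have hq'' : (q : ℕ) + d < n := by have := q'.isLt; omega
      set q'' : Fin n := ⟨(q : ℕ) + d, hq''⟩ with hq''_def
      have h1 := ih q q'' rfl
      have h2 : q'' < q' := by
        rw [Fin.lt_def]
        simp [hq''_def]
        omega
      have h3 := hσ h2
      simp only [Function.comp_apply] at h3
      push_cast
      push_cast at h1
      omega
  -- N2
  have hN2 : ∀ q : Fin n, reflTuple n l1 l2 i j a (σ q) ≤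
      (l1.rowLen q : ℤ) + ((n : ℤ) - (q : ℕ)) := by
    intro q
    rcases lt_trichotomy ((q : ℕ)) ((t : ℕ)) with h | h | h
    · have h1 := hA q h
      have := x_apply (l1 := l1) (l2 := l2) q
      have h0 : (0 : ℤ) ≤ (l2.rowLen (n - 1 - (q : ℕ)) : ℤ) := Int.natCast_nonneg _
      omega
    · have hqt : q = t := Fin.ext h
      rw [hqt, hyt]
      have h0 : (0 : ℤ) ≤ (l1.rowLen t : ℤ) := Int.natCast_nonneg _
      omega
    · have h1 := ychain ((q : ℕ) - (t : ℕ)) t q (by omega)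
      rw [hyt] at h1
      have h0 : (0 : ℤ) ≤ (l1.rowLen q : ℤ) := Int.natCast_nonneg _
      have hc : (((q : ℕ) - (t : ℕ) : ℕ) : ℤ) = ((q : ℕ) : ℤ) - ((t : ℕ) : ℤ) := by
        omega
      omega
  -- N3
  have hN3 : ∀ q : Fin n, ((n : ℤ) - (q : ℕ)) - (l2.rowLen (n - 1 - (q : ℕ)) : ℤ) ≤
      reflTuple n l1 l2 i j a (σ q) := by
    intro q
    rcases lt_trichotomy ((s : ℕ)) ((q : ℕ)) with h | h | h
    · have h1 := hB q h
      have := x_apply (l1 := l1) (l2 := l2) q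
      have h0 : (0 : ℤ) ≤ (l1.rowLen q : ℤ) := Int.natCast_nonneg _
      omega
    · have hqs : q = s := Fin.ext h.symm
      rw [hqs, hys]
      have h0 : (0 : ℤ) ≤ (l2.rowLen (n - 1 - (s : ℕ)) : ℤ) := Int.natCast_nonneg _
      omega
    · have h1 := ychain ((s : ℕ) - (q : ℕ)) q s (by omega)
      rw [hys] at h1
      have h0 : (0 : ℤ) ≤ (l2.rowLen (n - 1 - (q : ℕ)) : ℤ) := Int.natCast_nonneg _
      have hc : (((s : ℕ) - (q : ℕ) : ℕ) : ℤ) = ((s : ℕ) : ℤ) - ((q : ℕ) : ℤ) := by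
        omega
      omega
  -- define the row length functions
  set f1 : ℕ → ℕ := fun q =>
    if h : q < n then (reflTuple n l1 l2 i j a (σ ⟨q, h⟩) - ((n : ℤ) - q)).toNat else 0
    with hf1_def
  set f2 : ℕ → ℕ := fun r =>
    if h : r < n then (((r : ℤ) + 1) - reflTuple n l1 l2 i j a (σ ⟨n - 1 - r, by omega⟩)).toNat
    else 0 with hf2_def
  -- monotonicity
  have hmono1 : ∀ k k' : ℕ, k ≤ k' → k' < n → f1 k' ≤ f1 k := by
    intro k k' hle hk'
    have hk : k < n := by omega
    rw [hf1_def]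
    simp only [hk, hk', dif_pos]
    have := ychain (k' - k) ⟨k, hk⟩ ⟨k', hk'⟩ (by simp; omega)
    have hc : ((k' - k : ℕ) : ℤ) = (k' : ℤ) - (k : ℤ) := by omega
    omega
  have hmono2 : ∀ k k' : ℕ, k ≤ k' → k' < n → f2 k' ≤ f2 k := by
    intro k k' hle hk'
    have hk : k < n := by omega
    rw [hf2_def]
    simp only [hk, hk', dif_pos]
    have := ychain ((n - 1 - k) - (n - 1 - k')) ⟨n - 1 - k', by omega⟩ ⟨n - 1 - k, by omega⟩
      (by simp; omega)
    have hc : (((n - 1 - k) - (n - 1 - k') : ℕ) : ℤ) = (k' : ℤ) - (k : ℤ) := by omega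
    omega
  -- lists
  have hw1 : ((List.range n).map f1).SortedGE := by
    rw [List.sortedGE_iff_pairwise, List.pairwise_iff_getElem]
    intro u v hu hv huv
    simp only [List.getElem_map, List.getElem_range] at *
    simp only [List.length_map, List.length_range] at hu hv
    exact hmono1 u v (le_of_lt huv) hv
  have hw2 : ((List.range n).map f2).SortedGE := by
    rw [List.sortedGE_iff_pairwise, List.pairwise_iff_getElem]
    intro u v hu hv huv
    simp only [List.getElem_map, List.getElem_range] at *
    simp only [List.length_map, List.length_range] at hu hv
    exact hmono2 u v (le_of_lt huv) hv
  obtain ⟨m1, hm1_def⟩ : ∃ m : YoungDiagram, m = YoungDiagram.ofRowLens _ hw1 := ⟨_, rfl⟩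
  obtain ⟨m2, hm2_def⟩ : ∃ m : YoungDiagram, m = YoungDiagram.ofRowLens _ hw2 := ⟨_, rfl⟩
  have hlen1 : ((List.range n).map f1).length = n := by simp
  have hlen2 : ((List.range n).map f2).length = n := by simp
  have hrow1 : ∀ k : ℕ, k < n → m1.rowLen k = f1 k := by
    intro k hk
    rw [hm1_def]
    have := YoungDiagram.rowLen_ofRowLens (w := (List.range n).map f1) (hw := hw1)
      ⟨k, by omega⟩
    simpa using this
  have hrow2 : ∀ k : ℕ, k < n → m2.rowLen k = f2 k := by
    intro k hk
    rw [hm2_def]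
    have := YoungDiagram.rowLen_ofRowLens (w := (List.range n).map f2) (hw := hw2)
      ⟨k, by omega⟩
    simpa using this
  have hrow1z : ∀ k : ℕ, n ≤ k → m1.rowLen k = 0 := by
    intro k hk
    rw [hm1_def]
    exact rowLen_ofRowLens_zero (by simp; omega)
  have hrow2z : ∀ k : ℕ, n ≤ k → m2.rowLen k = 0 := by
    intro k hk
    rw [hm2_def]
    exact rowLen_ofRowLens_zero (by simp; omega)
  -- pointwise row length values
  have hval1 : ∀ q : Fin n, m1.rowLen (q : ℕ) =
      (reflTuple n l1 l2 i j a (σ q) - ((n : ℤ) - (q : ℕ))).toNat := by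
    intro q
    rw [hrow1 _ q.isLt]
    simp only [hf1_def]
    rw [dif_pos q.isLt]
  have hy2 : ∀ q : Fin n, m2.rowLen (n - 1 - (q : ℕ)) =
      (((n : ℤ) - (q : ℕ)) - reflTuple n l1 l2 i j a (σ q)).toNat := by
    intro q
    have hlt : n - 1 - (q : ℕ) < n := by omega
    rw [hrow2 _ hlt]
    simp only [hf2_def]
    rw [dif_pos hlt]
    have hσeq : ∀ (h : n - 1 - (n - 1 - (q : ℕ)) < n),
        σ ⟨n - 1 - (n - 1 - (q : ℕ)), h⟩ = σ q := by
      intro h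
      congr 1
      exact Fin.ext (by simp; omega)
    rw [hσeq]
    have hcast2 : ((n - 1 - (q : ℕ) : ℕ) : ℤ) = (n : ℤ) - 1 - ((q : ℕ) : ℤ) := by omega
    rw [hcast2]
    congr 1
    ring
  -- the main claims
  refine ⟨m1, m2, ?_, ?_, ?_, ?_, ?_, ?_⟩
  · -- colLen sum
    have hk1 : m1.colLen 0 ≤ n := by
      by_contra hc
      push_neg at hc
      have := rowLen_pos' (μ := m1) (r := n) hc
      rw [hrow1z n (le_refl n)] at this
      omega
    have hk2 : m2.colLen 0 ≤ n := by
      by_contra hc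
      push_neg at hc
      have := rowLen_pos' (μ := m2) (r := n) hc
      rw [hrow2z n (le_refl n)] at this
      omega
    rcases Nat.eq_zero_or_pos (m1.colLen 0) with h1 | h1
    · omega
    rcases Nat.eq_zero_or_pos (m2.colLen 0) with h2 | h2
    · omega
    by_contra hc
    push_neg at hc
    have hQ1lt : m1.colLen 0 - 1 < n := by omega
    have hQ2lt : n - m2.colLen 0 < n := by omega
    have hp1 : 0 < m1.rowLen (m1.colLen 0 - 1) := rowLen_pos' (by omega)
    have hp2 : 0 < m2.rowLen (m2.colLen 0 - 1) := rowLen_pos' (by omega)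
    have e1 := hval1 ⟨m1.colLen 0 - 1, hQ1lt⟩
    simp only [Fin.val_mk] at e1
    rw [e1] at hp1
    have e2 := hy2 ⟨n - m2.colLen 0, hQ2lt⟩
    simp only [Fin.val_mk] at e2
    have hidx : n - 1 - (n - m2.colLen 0) = m2.colLen 0 - 1 := by omega
    rw [hidx] at e2
    rw [e2] at hp2
    have hch := ychain ((m1.colLen 0 - 1) - (n - m2.colLen 0))
      ⟨n - m2.colLen 0, hQ2lt⟩ ⟨m1.colLen 0 - 1, hQ1lt⟩ (by simp; omega)
    have hc1 : (((m1.colLen 0 - 1) - (n - m2.colLen 0) : ℕ) : ℤ)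
        = ((m1.colLen 0 : ℤ) - 1) - ((n : ℤ) - (m2.colLen 0 : ℤ)) := by omega
    omega
  · -- the weight equation
    intro q
    have hq : (q : ℕ) < n := q.isLt
    simp only [pairWeight, rhoGL]
    rw [hval1 q, hy2 q]
    omega
  · -- m1 ≤ l1
    rw [← YoungDiagram.cells_subset_iff]
    rintro ⟨r, c⟩ hc
    rw [YoungDiagram.mem_cells, YoungDiagram.mem_iff_lt_rowLen] at hc ⊢
    rcases Nat.lt_or_ge r n with hr | hr
    · have e1 := hval1 ⟨r, hr⟩
      simp only [Fin.val_mk] at e1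
      rw [e1] at hc
      have h2 := hN2 ⟨r, hr⟩
      simp only [Fin.val_mk] at h2
      omega
    · rw [hrow1z _ hr] at hc
      omega
  · -- m1 ≠ l1
    intro hcon
    have h1 : m1.rowLen (i : ℕ) = l1.rowLen (i : ℕ) := by rw [hcon]
    rw [hval1 i] at h1
    have hz : xrho n l1 l2 i = (l1.rowLen i : ℤ) + ((n : ℤ) - (i : ℕ)) :=
      x_zone1 (by omega)
    have hpos : 0 < l1.rowLen i := rowLen_pos' hi
    omega
  · -- m2 ≤ l2
    rw [← YoungDiagram.cells_subset_iff]
    rintro ⟨r, c⟩ hc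
    rw [YoungDiagram.mem_cells, YoungDiagram.mem_iff_lt_rowLen] at hc ⊢
    rcases Nat.lt_or_ge r n with hr | hr
    · have hlt : n - 1 - r < n := by omega
      have e2 := hy2 ⟨n - 1 - r, hlt⟩
      simp only [Fin.val_mk] at e2
      have hidx : n - 1 - (n - 1 - r) = r := by omega
      rw [hidx] at e2
      rw [e2] at hc
      have h3 := hN3 ⟨n - 1 - r, hlt⟩
      simp only [Fin.val_mk] at h3
      rw [hidx] at h3
      have hcast2 : ((n - 1 - r : ℕ) : ℤ) = (n : ℤ) - 1 - (r : ℤ) := by omega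
      omega
    · rw [hrow2z _ hr] at hc
      omega
  · -- m2 ≠ l2
    intro hcon
    have h1 : m2.rowLen (n - 1 - (j : ℕ)) = l2.rowLen (n - 1 - (j : ℕ)) := by rw [hcon]
    rw [hy2 j] at h1
    have hz : xrho n l1 l2 j = ((n : ℤ) - (j : ℕ)) - (l2.rowLen (n - 1 - (j : ℕ)) : ℤ) :=
      x_zone2 (by omega)
    have hpos : 0 < l2.rowLen (n - 1 - (j : ℕ)) := rowLen_pos' (by omega)
    omega

end Final

end Main

end Incl

/-- Lemma `inclusion`: for `λ¹, λ²` `p`-cores and admissible data `(i, j, a, l)`,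
write `μ = sort(s_{α,l}(λ+ρ)) − ρ = [μ¹, μ²]` (the sorting being realised by a
permutation `σ` making the tuple strictly decreasing).  Then `μ¹, μ²` are
partitions with `μ¹ ⊊ λ¹` and `μ² ⊊ λ²`, and the assignment `(i, j, l) ↦ μ`
is injective on the set of such data. -/
theorem inclusion_lemma (n p : ℕ) (hn : 1 ≤ n) (hp : 1 ≤ p)
    (l1 l2 : YoungDiagram) (hlen : l1.colLen 0 + l2.colLen 0 ≤ n)
    (hcore1 : l1.IsCore p) (hcore2 : l2.IsCore p) :
    ∀ (i j : Fin n) (a l : ℕ), ReflData n p l1 l2 i j a l →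
      ∀ σ : Equiv.Perm (Fin n), StrictAnti (reflTuple n l1 l2 i j a ∘ ⇑σ) →
        ((∃ m1 m2 : YoungDiagram, m1.colLen 0 + m2.colLen 0 ≤ n ∧
            (∀ q : Fin n, reflTuple n l1 l2 i j a (σ q) - rhoGL n q = pairWeight n m1 m2 q) ∧
            m1 ≤ l1 ∧ m1 ≠ l1 ∧ m2 ≤ l2 ∧ m2 ≠ l2) ∧
          ∀ (i' j' : Fin n) (a' l' : ℕ), ReflData n p l1 l2 i' j' a' l' →
            ∀ σ' : Equiv.Perm (Fin n), StrictAnti (reflTuple n l1 l2 i' j' a' ∘ ⇑σ') →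
              (∀ q : Fin n, reflTuple n l1 l2 i j a (σ q) = reflTuple n l1 l2 i' j' a' (σ' q)) →
              i = i' ∧ j = j' ∧ l = l') := by
  intro i j a l hD σ hσ
  constructor
  · exact Incl.construction hp hlen hcore1 hcore2 hD hσ
  · intro i' j' a' l' hD' σ' hσ' hpt
    obtain ⟨hi, hj, ha, hl, heq, hinj⟩ := id hD
    obtain ⟨hi', hj', ha', hl', heq', hinj'⟩ := id hD'
    have hijlt : (i : ℕ) < (j : ℕ) := Incl.hij_lt hlen hD
    have hijlt' : (i' : ℕ) < (j' : ℕ) := Incl.hij_lt hlen hD'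
    have hlp1 : 1 ≤ l * p := Nat.one_le_iff_ne_zero.mpr (by positivity)
    have hcast : ((l * p : ℕ) : ℤ) = (l : ℤ) * p := by push_cast; ring
    have hcast' : ((l' * p : ℕ) : ℤ) = (l' : ℤ) * p := by push_cast; ring
    have hcastlen : (l1.colLen 0 : ℤ) + (l2.colLen 0 : ℤ) ≤ (n : ℤ) := by exact_mod_cast hlen
    have hex : ∀ v : ℤ, (∃ q : Fin n, reflTuple n l1 l2 i' j' a' q = v) →
        ∃ q : Fin n, reflTuple n l1 l2 i j a q = v := by
      rintro v ⟨q, hq⟩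
      refine ⟨σ (σ'.symm q), ?_⟩
      have h0 := hpt (σ'.symm q)
      simp only [Equiv.apply_symm_apply] at h0
      rw [h0, hq]
    have h1 : i = i' := by
      by_contra hii
      have hij2 : i ≠ j' := Fin.ne_of_val_ne (by omega)
      have hval : reflTuple n l1 l2 i' j' a' i = xrho n l1 l2 i :=
        Incl.refl_apply_other hii hij2
      obtain ⟨Q, hQ⟩ := hex (xrho n l1 l2 i) ⟨i, hval⟩
      by_cases hQi : Q = i
      · rw [hQi, Incl.refl_apply_i hlen hD] at hQ
        omega
      by_cases hQj : Q = j
      · rw [hQj, Incl.refl_j_eq hlen hD] at hQ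
        omega
      · rw [Incl.refl_apply_other hQi hQj] at hQ
        exact hQi (Incl.x_inj hQ)
    subst h1
    have h2 : j = j' := by
      by_contra hjj
      have hji2 : j ≠ i := Fin.ne_of_val_ne (by omega)
      have hval : reflTuple n l1 l2 i j' a' j = xrho n l1 l2 j :=
        Incl.refl_apply_other hji2 hjj
      obtain ⟨Q, hQ⟩ := hex (xrho n l1 l2 j) ⟨j, hval⟩
      by_cases hQi : Q = i
      · rw [hQi, Incl.refl_i_eq hlen hD] at hQ
        omega
      by_cases hQj : Q = j
      · rw [hQj, Incl.refl_apply_j hlen hD] at hQ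
        omega
      · rw [Incl.refl_apply_other hQi hQj] at hQ
        exact hQj (Incl.x_inj hQ)
    subst h2
    refine ⟨rfl, rfl, ?_⟩
    obtain ⟨Q, hQ⟩ := hex (reflTuple n l1 l2 i j a' i) ⟨i, rfl⟩
    have hval' : reflTuple n l1 l2 i j a' i = xrho n l1 l2 i - a' :=
      Incl.refl_apply_i hlen hD'
    by_cases hQi : Q = i
    · rw [hQi, Incl.refl_apply_i hlen hD, hval'] at hQ
      have haa : a = a' := by omega
      subst haa
      have hll : (l : ℤ) * p = (l' : ℤ) * p := by omega
      have hpne : (p : ℤ) ≠ 0 := by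
        have : (1 : ℤ) ≤ (p : ℤ) := by exact_mod_cast hp
        omega
      have : (l : ℤ) = (l' : ℤ) := mul_right_cancel₀ hpne hll
      exact_mod_cast this
    by_cases hQj : Q = j
    · exfalso
      rw [hQj] at hQ
      have hb1 : reflTuple n l1 l2 i j a j ≤ (l2.colLen 0 : ℤ) :=
        Incl.xj_le hlen hD hp hcore1
      have hb2 : (n : ℤ) + 1 - (l1.colLen 0 : ℤ) ≤ reflTuple n l1 l2 i j a' i :=
        Incl.xi_ge hlen hD' hp hcore2
      omega
    · exfalso
      rw [Incl.refl_apply_other hQi hQj] at hQ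
      have hQ2 : reflTuple n l1 l2 i j a' Q = reflTuple n l1 l2 i j a' i := by
        rw [Incl.refl_apply_other hQi hQj, hQ]
      exact hQi (hinj' hQ2)
end
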